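/- arXiv:2004.14455 — 2 statements merged into one kernel-verified Lean document; each statement's English description precedes it below -/
import Mathlib

section
/- Let Θ be an N×N symmetric positive-definite real matrix, S a lower-triangular sparsity set, and L the KL-optimal factor defined by L_{s_j,j} := Θ_{s_j,s_j}⁻¹ e₁ / √(e₁ᵀ Θ_{s_j,s_j}⁻¹ e₁) and zeros outside S. Then L is the unique minimizer: for every L̂ ∈ 𝒮 with positive diagonal entries and L̂ ≠ L, one has 𝒟(Θ, (L Lᵀ)⁻¹) < 𝒟(Θ, (L̂ L̂ᵀ)⁻¹). -/
open Matrix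

noncomputable section

/-- The Gaussian KL functional
`𝒟(Θ₁, Θ₂) = (trace(Θ₂⁻¹ Θ₁) + log det Θ₂ − log det Θ₁ − N)/2`,
the Kullback–Leibler divergence between `N(0, Θ₁)` and `N(0, Θ₂)`. -/
def gaussKL {N : ℕ} (Θ₁ Θ₂ : Matrix (Fin N) (Fin N) ℝ) : ℝ :=
  ((Θ₂⁻¹ * Θ₁).trace + Real.log Θ₂.det - Real.log Θ₁.det - (N : ℝ)) / 2

/-- The index set `s_j = {i : (i, j) ∈ S}` of column `j`, as a subtype. -/
abbrev colIdx {N : ℕ} (S : Finset (Fin N × Fin N)) (j : Fin N) : Type :=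
  {i : Fin N // (i, j) ∈ S}

/-- The principal submatrix `Θ_{s_j, s_j}`. -/
def colSub {N : ℕ} (Θ : Matrix (Fin N) (Fin N) ℝ) (S : Finset (Fin N × Fin N))
    (j : Fin N) : Matrix (colIdx S j) (colIdx S j) ℝ :=
  Θ.submatrix Subtype.val Subtype.val

/-- The standard basis vector `e₁` of `ℝ^{s_j}` corresponding to the index `j`. -/
def colE1 {N : ℕ} (S : Finset (Fin N × Fin N)) (j : Fin N) (h : (j, j) ∈ S) :
    colIdx S j → ℝ :=
  Pi.single ⟨j, h⟩ 1

/-- The KL-optimal sparse factor `L`, defined columnwise by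
`L_{s_j, j} = Θ_{s_j,s_j}⁻¹ e₁ / √(e₁ᵀ Θ_{s_j,s_j}⁻¹ e₁)` and `L i j = 0` for `(i,j) ∉ S`. -/
def klFactor {N : ℕ} (Θ : Matrix (Fin N) (Fin N) ℝ) (S : Finset (Fin N × Fin N))
    (hdiag : ∀ i : Fin N, (i, i) ∈ S) : Matrix (Fin N) (Fin N) ℝ :=
  fun i j =>
    if h : (i, j) ∈ S then
      ((colSub Θ S j)⁻¹ *ᵥ colE1 S j (hdiag j)) ⟨i, h⟩ /
        Real.sqrt (colE1 S j (hdiag j) ⬝ᵥ ((colSub Θ S j)⁻¹ *ᵥ colE1 S j (hdiag j)))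
    else 0

/-! For `L` supported on the lower-triangular pattern `S` with nonzero diagonal,
`det L = ∏ⱼ L j j` and `trace (L Lᵀ Θ) = ∑ⱼ L_{:,j}ᵀ Θ L_{:,j}`, so
`2 𝒟(Θ, (L Lᵀ)⁻¹) + log det Θ + N` is a sum of independent column terms
`vᵀ A v - 2 log v₁` with `v = L_{s_j,j}` and `A = Θ_{s_j,s_j}`. Writing `β = (A⁻¹)₁₁` and
splitting `v` into its multiple of `A⁻¹e₁` and an `A`-orthogonal remainder `w`, a column term
equals `wᵀ A w + (v₁² / β - 2 log v₁) ≥ 0 + (1 - log β)`, by `log x ≤ x - 1`. Equality forces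
`w = 0` and `v₁ = √β`, i.e. `v = A⁻¹e₁ / √β`, which is the `j`-th column of `klFactor`. -/

lemma one_sub_log_le_sq_div_sub_two_mul_log {β t : ℝ} (hβ : 0 < β) (ht : 0 < t) :
    1 - Real.log β ≤ t ^ 2 / β - 2 * Real.log t := by
  have := Real.log_le_sub_one_of_pos (x := t ^ 2 / β) (by positivity)
  rw [Real.log_div (by positivity) hβ.ne', Real.log_pow] at this
  push_cast at this
  linarith

lemma one_sub_log_lt_sq_div_sub_two_mul_log {β t : ℝ} (hβ : 0 < β) (ht : 0 < t)
    (hne : t ^ 2 ≠ β) : 1 - Real.log β < t ^ 2 / β - 2 * Real.log t := by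
  have := Real.log_lt_sub_one_of_pos (x := t ^ 2 / β) (by positivity)
    (by rwa [ne_eq, div_eq_one_iff_eq hβ.ne'])
  rw [Real.log_div (by positivity) hβ.ne', Real.log_pow] at this
  push_cast at this
  linarith

section QuadraticForm

variable {n R : Type*} [Fintype n]

lemma trace_mul_transpose_mul [CommSemiring R] (L M : Matrix n n R) :
    (L * Lᵀ * M).trace = ∑ j, (fun i ↦ L i j) ⬝ᵥ M *ᵥ fun i ↦ L i j := by
  rw [Matrix.mul_assoc, trace_mul_comm, trace]
  refine Finset.sum_congr rfl fun j _ ↦ ?_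
  simp only [diag_apply, mul_apply, transpose_apply, dotProduct, mulVec, Finset.mul_sum,
    Finset.sum_mul]
  rw [Finset.sum_comm]
  exact Finset.sum_congr rfl fun _ _ ↦ Finset.sum_congr rfl fun _ _ ↦ by ring

lemma dotProduct_mulVec_submatrix_val [CommSemiring R] {p : n → Prop} [DecidablePred p]
    (M : Matrix n n R) {v : n → R} (hv : ∀ k, ¬ p k → v k = 0) :
    (fun k : Subtype p ↦ v k) ⬝ᵥ M.submatrix Subtype.val Subtype.val *ᵥ
        (fun k : Subtype p ↦ v k) = v ⬝ᵥ M *ᵥ v := by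
  have hsum : ∀ f : n → R, (∀ k, ¬ p k → f k = 0) →
      ∑ k : Subtype p, f k = ∑ k, f k :=
    fun f hf ↦ (Finset.sum_congr_set {k | p k} f _ (fun _ _ ↦ rfl) hf).symm
  have hrow : ∀ k : Subtype p,
      (M.submatrix Subtype.val Subtype.val *ᵥ fun l : Subtype p ↦ v l) k = (M *ᵥ v) k :=
    fun k ↦ hsum (fun l ↦ M k l * v l) fun l hl ↦ by simp [hv l hl]
  simp only [dotProduct, hrow]
  exact hsum (fun k ↦ v k * (M *ᵥ v) k) fun k hk ↦ by simp [hv k hk]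

lemma dotProduct_mulVec_eq_add_sq_div [DecidableEq n] {A : Matrix n n ℝ} (hA : A.IsSymm)
    (hdet : IsUnit A.det) {i : n} (hβ : A⁻¹ i i ≠ 0) (v : n → ℝ) :
    v ⬝ᵥ A *ᵥ v = (v - (v i / A⁻¹ i i) • A⁻¹ *ᵥ Pi.single i 1) ⬝ᵥ
        A *ᵥ (v - (v i / A⁻¹ i i) • A⁻¹ *ᵥ Pi.single i 1) + v i ^ 2 / A⁻¹ i i := by
  have hAu : A *ᵥ A⁻¹ *ᵥ Pi.single i 1 = Pi.single i 1 := by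
    rw [mulVec_mulVec, mul_nonsing_inv A hdet, one_mulVec]
  have huA : ∀ w, (A⁻¹ *ᵥ Pi.single i 1) ⬝ᵥ A *ᵥ w = w i := fun w ↦ by
    rw [dotProduct_mulVec, ← mulVec_transpose, hA.eq, hAu, single_one_dotProduct]
  have hui : (A⁻¹ *ᵥ Pi.single i 1) i = A⁻¹ i i := by
    rw [mulVec_single_one]; rfl
  simp only [mulVec_sub, mulVec_smul, dotProduct_sub, sub_dotProduct, dotProduct_smul,
    smul_dotProduct, smul_eq_mul, huA, hAu, dotProduct_single_one, hui, Pi.sub_apply,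
    Pi.smul_apply]
  field_simp
  ring

end QuadraticForm

section ColumnLoss

variable {n : Type*} [Fintype n] [DecidableEq n]

def columnLoss (A : Matrix n n ℝ) (i : n) (v : n → ℝ) : ℝ :=
  v ⬝ᵥ A *ᵥ v - 2 * Real.log (v i)

def klColumn (A : Matrix n n ℝ) (i : n) : n → ℝ :=
  fun k ↦ A⁻¹ k i / √(A⁻¹ i i)

lemma klColumn_eq_smul (A : Matrix n n ℝ) (i : n) :
    klColumn A i = (√(A⁻¹ i i))⁻¹ • A⁻¹ *ᵥ Pi.single i 1 := by
  ext k
  simp [klColumn, div_eq_inv_mul]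

lemma klColumn_apply_self (A : Matrix n n ℝ) (i : n) : klColumn A i i = √(A⁻¹ i i) :=
  Real.div_sqrt

variable {A : Matrix n n ℝ} {i : n}

lemma columnLoss_eq_add (hA : A.PosDef) (v : n → ℝ) :
    columnLoss A i v = (v - (v i / A⁻¹ i i) • A⁻¹ *ᵥ Pi.single i 1) ⬝ᵥ
        A *ᵥ (v - (v i / A⁻¹ i i) • A⁻¹ *ᵥ Pi.single i 1) +
      (v i ^ 2 / A⁻¹ i i - 2 * Real.log (v i)) := by
  rw [columnLoss, dotProduct_mulVec_eq_add_sq_div (isHermitian_iff_isSymm.mp hA.isHermitian)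
    (isUnit_iff_ne_zero.mpr hA.det_pos.ne') (hA.inv.diag_pos (i := i)).ne']
  ring

lemma one_sub_log_le_columnLoss (hA : A.PosDef) {v : n → ℝ} (hv : 0 < v i) :
    1 - Real.log (A⁻¹ i i) ≤ columnLoss A i v := by
  rw [columnLoss_eq_add hA]
  have hres := hA.posSemidef.dotProduct_mulVec_nonneg
    (v - (v i / A⁻¹ i i) • A⁻¹ *ᵥ Pi.single i 1)
  have hdiag := one_sub_log_le_sq_div_sub_two_mul_log (hA.inv.diag_pos (i := i)) hv
  rw [star_trivial] at hres
  linarith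

lemma eq_klColumn_of_columnLoss_le (hA : A.PosDef) {v : n → ℝ} (hv : 0 < v i)
    (h : columnLoss A i v ≤ 1 - Real.log (A⁻¹ i i)) : v = klColumn A i := by
  have hβ : 0 < A⁻¹ i i := hA.inv.diag_pos
  rw [columnLoss_eq_add hA] at h
  have hres : v - (v i / A⁻¹ i i) • A⁻¹ *ᵥ Pi.single i 1 = 0 := by
    by_contra hne
    have hpos := hA.dotProduct_mulVec_pos hne
    have hdiag := one_sub_log_le_sq_div_sub_two_mul_log hβ hv
    rw [star_trivial] at hpos
    linarith
  have hvi : v i = √(A⁻¹ i i) := by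
    by_contra hne
    have hdiag := one_sub_log_lt_sq_div_sub_two_mul_log hβ hv
      fun h ↦ hne (by rw [← h, Real.sqrt_sq hv.le])
    rw [hres, zero_dotProduct] at h
    linarith
  rw [sub_eq_zero, hvi, Real.sqrt_div_self] at hres
  rw [hres, klColumn_eq_smul]

lemma columnLoss_klColumn (hA : A.PosDef) :
    columnLoss A i (klColumn A i) = 1 - Real.log (A⁻¹ i i) := by
  have hβ : 0 < A⁻¹ i i := hA.inv.diag_pos
  rw [columnLoss, klColumn_apply_self, klColumn_eq_smul, mulVec_smul, mulVec_mulVec,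
    mul_nonsing_inv A (isUnit_iff_ne_zero.mpr hA.det_pos.ne'), one_mulVec, dotProduct_smul,
    smul_dotProduct, dotProduct_single_one, mulVec_single_one, Real.log_sqrt hβ.le]
  simp only [col_apply, smul_eq_mul]
  field_simp
  rw [Real.sq_sqrt hβ.le]
  ring

lemma columnLoss_klColumn_le (hA : A.PosDef) {v : n → ℝ} (hv : 0 < v i) :
    columnLoss A i (klColumn A i) ≤ columnLoss A i v :=
  (columnLoss_klColumn hA).trans_le (one_sub_log_le_columnLoss hA hv)

lemma columnLoss_klColumn_lt (hA : A.PosDef) {v : n → ℝ} (hv : 0 < v i)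
    (hne : v ≠ klColumn A i) : columnLoss A i (klColumn A i) < columnLoss A i v := by
  rw [columnLoss_klColumn hA]
  exact lt_of_not_ge fun h ↦ hne (eq_klColumn_of_columnLoss_le hA hv h)

end ColumnLoss

lemma gaussKL_inv_mul_transpose {N : ℕ} (Θ L : Matrix (Fin N) (Fin N) ℝ) (hL : L.det ≠ 0) :
    gaussKL Θ ((L * Lᵀ)⁻¹) =
      ((L * Lᵀ * Θ).trace - 2 * Real.log L.det - Real.log Θ.det - N) / 2 := by
  have hdet : (L * Lᵀ).det = L.det ^ 2 := by rw [det_mul, det_transpose, sq]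
  rw [gaussKL, nonsing_inv_nonsing_inv _ (by rw [hdet]; exact (pow_ne_zero 2 hL).isUnit),
    det_nonsing_inv, Ring.inverse_eq_inv', Real.log_inv, hdet, Real.log_pow]
  push_cast
  ring

section SparseFactor

variable {N : ℕ} {S : Finset (Fin N × Fin N)}

lemma posDef_colSub {Θ : Matrix (Fin N) (Fin N) ℝ} (hΘ : Θ.PosDef) (j : Fin N) :
    (colSub Θ S j).PosDef :=
  hΘ.submatrix Subtype.val_injective

lemma gaussKL_inv_mul_transpose_eq_sum_columnLoss (Θ : Matrix (Fin N) (Fin N) ℝ)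
    (hdiag : ∀ i : Fin N, (i, i) ∈ S) (hlow : ∀ i j : Fin N, (i, j) ∈ S → j ≤ i)
    {L : Matrix (Fin N) (Fin N) ℝ} (hL : ∀ i j, L i j ≠ 0 → (i, j) ∈ S)
    (hLdiag : ∀ j, L j j ≠ 0) :
    gaussKL Θ ((L * Lᵀ)⁻¹) =
      (∑ j, columnLoss (colSub Θ S j) ⟨j, hdiag j⟩ (fun p ↦ L p.1 j) -
        Real.log Θ.det - N) / 2 := by
  have hdet : L.det = ∏ j, L j j :=
    det_of_isLowerTriangular L fun i j hij ↦ by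
      by_contra h
      exact (hlow i j (hL i j h)).not_gt hij
  have hcol : ∀ j, (fun p : colIdx S j ↦ L p.1 j) ⬝ᵥ colSub Θ S j *ᵥ (fun p ↦ L p.1 j) =
      (fun i ↦ L i j) ⬝ᵥ Θ *ᵥ fun i ↦ L i j := fun j ↦
    dotProduct_mulVec_submatrix_val Θ fun i hi ↦ by_contra fun h ↦ hi (hL i j h)
  rw [gaussKL_inv_mul_transpose Θ L (hdet ▸ Finset.prod_ne_zero_iff.mpr fun j _ ↦ hLdiag j),
    trace_mul_transpose_mul, hdet, Real.log_prod fun j _ ↦ hLdiag j]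
  simp only [columnLoss, hcol, Finset.sum_sub_distrib, Finset.mul_sum]

lemma eq_of_forall_col_eq {L L' : Matrix (Fin N) (Fin N) ℝ}
    (hL : ∀ i j, L i j ≠ 0 → (i, j) ∈ S) (hL' : ∀ i j, L' i j ≠ 0 → (i, j) ∈ S)
    (h : ∀ j, (fun p : colIdx S j ↦ L p.1 j) = fun p ↦ L' p.1 j) : L = L' := by
  ext i j
  by_cases hij : (i, j) ∈ S
  · exact congrFun (h j) ⟨i, hij⟩
  · rw [not_imp_comm.mp (hL i j) hij, not_imp_comm.mp (hL' i j) hij]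

variable (Θ : Matrix (Fin N) (Fin N) ℝ) (hdiag : ∀ i : Fin N, (i, i) ∈ S)

lemma klFactor_col (j : Fin N) :
    (fun p : colIdx S j ↦ klFactor Θ S hdiag p.1 j) =
      klColumn (colSub Θ S j) ⟨j, hdiag j⟩ := by
  funext p
  simp [klFactor, p.2, klColumn, colE1]

lemma mem_of_klFactor_ne_zero (i j : Fin N) (h : klFactor Θ S hdiag i j ≠ 0) : (i, j) ∈ S :=
  by_contra fun hij ↦ h (dif_neg hij)

lemma klFactor_diag_pos (hΘ : Θ.PosDef) (j : Fin N) :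
    0 < klFactor Θ S hdiag j j := by
  rw [show klFactor Θ S hdiag j j = _ from congrFun (klFactor_col Θ hdiag j) ⟨j, hdiag j⟩,
    klColumn_apply_self]
  exact Real.sqrt_pos.mpr (posDef_colSub hΘ j).inv.diag_pos

end SparseFactor

/-- The KL-optimal factor `L` is the unique minimizer: for every
`L̂ ∈ 𝒮` with positive diagonal entries and `L̂ ≠ L`, the KL divergence at `L̂` is
strictly larger than at `L`. -/
theorem klFactor_unique_minimizer
    {N : ℕ} (Θ : Matrix (Fin N) (Fin N) ℝ) (hΘ : Θ.PosDef)
    (S : Finset (Fin N × Fin N))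
    (hdiag : ∀ i : Fin N, (i, i) ∈ S)
    (hlow : ∀ i j : Fin N, (i, j) ∈ S → j ≤ i) :
    ∀ L' : Matrix (Fin N) (Fin N) ℝ,
      (∀ i j : Fin N, L' i j ≠ 0 → (i, j) ∈ S) →
      (∀ i : Fin N, 0 < L' i i) →
      L' ≠ klFactor Θ S hdiag →
      gaussKL Θ ((klFactor Θ S hdiag * (klFactor Θ S hdiag)ᵀ)⁻¹) <
        gaussKL Θ ((L' * L'ᵀ)⁻¹) := by
  intro L' hL' hpos hne
  have hL := mem_of_klFactor_ne_zero Θ hdiag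
  rw [gaussKL_inv_mul_transpose_eq_sum_columnLoss Θ hdiag hlow hL
      fun j ↦ (klFactor_diag_pos Θ hdiag hΘ j).ne',
    gaussKL_inv_mul_transpose_eq_sum_columnLoss Θ hdiag hlow hL' fun j ↦ (hpos j).ne']
  obtain ⟨j₀, hj₀⟩ :
      ∃ j, (fun p : colIdx S j ↦ L' p.1 j) ≠ klColumn (colSub Θ S j) ⟨j, hdiag j⟩ := by
    by_contra! h
    exact hne <| eq_of_forall_col_eq hL' hL fun j ↦ (h j).trans (klFactor_col Θ hdiag j).symm
  have hlt := Finset.sum_lt_sum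
    (fun j _ ↦ (klFactor_col Θ hdiag j).symm ▸
      columnLoss_klColumn_le (posDef_colSub hΘ j) (v := fun p ↦ L' p.1 j) (hpos j))
    ⟨j₀, Finset.mem_univ _, (klFactor_col Θ hdiag j₀).symm ▸
      columnLoss_klColumn_lt (posDef_colSub hΘ j₀) (hpos j₀) hj₀⟩
  linarith

end
end

section
/- Let M = [[A, C],[Cᵀ, D]] be a symmetric positive-definite real matrix with blocks A ∈ ℝ^{m×m}, C ∈ ℝ^{m×p}, D ∈ ℝ^{p×p}. Suppose A = U Uᵀ with U ∈ ℝ^{m×m} upper triangular with positive diagonal entries, and set B := U⁻¹ C. Then the leading entry of the inverse satisfies (e₁; 0)ᵀ M⁻¹ (e₁; 0) = ( 1 + e₁ᵀ B (D − Bᵀ B)⁻¹ Bᵀ e₁ ) / U₁₁², where e₁ ∈ ℝ^m is the first standard basis vector; in particular, √( (e₁;0)ᵀ M⁻¹ (e₁;0) ) = c / U₁₁ with c := √( 1 + e₁ᵀ B (D − Bᵀ B)⁻¹ Bᵀ e₁ ). -/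
/-!
By the Schur-complement formula the top-left block of `M⁻¹` is `A⁻¹ + A⁻¹ C S⁻¹ Cᵀ A⁻¹` with
`S = D - Cᵀ A⁻¹ C`. Substituting `A = U Uᵀ` turns it into `U⁻ᵀ (1 + B (D - Bᵀ B)⁻¹ Bᵀ) U⁻¹`, so the
quadratic form at `(e₁; 0)` is that of `1 + B (D - Bᵀ B)⁻¹ Bᵀ` at `U⁻¹ e₁`, and `U⁻¹ e₁ = e₁ / U₁₁`
because `e₁` is an eigenvector of the upper triangular `U`.
-/

open Matrix

namespace Matrix

variable {m n R : Type*} [Fintype m] [Fintype n]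

theorem sumElim_dotProduct_mulVec_sumElim_zero [CommSemiring R]
    (M : Matrix (m ⊕ n) (m ⊕ n) R) (x : m → R) :
    Sum.elim x 0 ⬝ᵥ (M *ᵥ Sum.elim x 0) = x ⬝ᵥ (M.toBlocks₁₁ *ᵥ x) := by
  rw [← fromBlocks_toBlocks M, fromBlocks_mulVec, sumElim_dotProduct_sumElim]
  simp

theorem dotProduct_transpose_mul_mul_mulVec [CommSemiring R]
    (P : Matrix n m R) (K : Matrix n n R) (x : m → R) :
    x ⬝ᵥ ((Pᵀ * K * P) *ᵥ x) = (P *ᵥ x) ⬝ᵥ (K *ᵥ (P *ᵥ x)) := by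
  rw [← mulVec_mulVec, ← mulVec_mulVec, dotProduct_mulVec, vecMul_transpose]

variable [DecidableEq m] [DecidableEq n]

theorem toBlocks₁₁_inv_fromBlocks [CommRing R]
    (A : Matrix m m R) (B : Matrix m n R) (C : Matrix n m R) (D : Matrix n n R)
    (hA : IsUnit A) (hM : IsUnit (fromBlocks A B C D)) :
    (fromBlocks A B C D)⁻¹.toBlocks₁₁ = A⁻¹ + A⁻¹ * B * (D - C * A⁻¹ * B)⁻¹ * C * A⁻¹ := by
  let := hA.invertible
  let := hM.invertible
  let := invertibleOfFromBlocks₁₁Invertible A B C D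
  rw [← invOf_eq_nonsing_inv, invOf_fromBlocks₁₁_eq]
  simp only [toBlocks_fromBlocks₁₁, invOf_eq_nonsing_inv]

theorem toBlocks₁₁_inv_fromBlocks_mul_transpose [CommRing R]
    (U : Matrix m m R) (C : Matrix m n R) (D : Matrix n n R)
    (hU : IsUnit U) (hM : IsUnit (fromBlocks (U * Uᵀ) C Cᵀ D)) :
    let B := U⁻¹ * C
    (fromBlocks (U * Uᵀ) C Cᵀ D)⁻¹.toBlocks₁₁ = (U⁻¹)ᵀ * (1 + B * (D - Bᵀ * B)⁻¹ * Bᵀ) * U⁻¹ := by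
  intro B
  rw [toBlocks₁₁_inv_fromBlocks _ C Cᵀ D (hU.mul ((isUnit_transpose U).mpr hU)) hM, mul_inv_rev,
    ← transpose_nonsing_inv]
  simp only [B, transpose_mul, Matrix.mul_add, Matrix.add_mul, Matrix.mul_one, Matrix.mul_assoc]

theorem IsUpperTriangular.mulVec_single_zero [Semiring R] {k : ℕ} [NeZero k]
    {U : Matrix (Fin k) (Fin k) R} (hU : U.IsUpperTriangular) :
    U *ᵥ Pi.single 0 1 = U 0 0 • Pi.single 0 1 := by
  ext i
  rcases eq_or_ne i 0 with rfl | hi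
  · simp [mulVec_single]
  · have h0i : (0 : Fin k) < i := (Fin.pos_iff_ne_zero' i).mpr hi
    simp [mulVec_single, Pi.single_eq_of_ne hi, hU h0i]

theorem IsUpperTriangular.inv_mulVec_single_zero [Field R] {k : ℕ} [NeZero k]
    {U : Matrix (Fin k) (Fin k) R} (hU : U.IsUpperTriangular) (hUnit : IsUnit U) :
    U⁻¹ *ᵥ Pi.single 0 1 = (U 0 0)⁻¹ • Pi.single 0 1 := by
  have h : Pi.single 0 1 = U 0 0 • (U⁻¹ *ᵥ Pi.single 0 1) := by
    rw [← mulVec_smul, ← hU.mulVec_single_zero, mulVec_mulVec,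
      nonsing_inv_mul _ ((isUnit_iff_isUnit_det U).mp hUnit), one_mulVec]
  have h0 : U 0 0 ≠ 0 := by
    rintro h0
    simpa [h0] using congrFun h 0
  exact (eq_inv_smul_iff₀ h0).mpr h.symm

end Matrix

/-- Let `M = [[A, C],[Cᵀ, D]]` be symmetric positive definite,
`A = U Uᵀ` with `U` upper triangular with positive diagonal, and `B = U⁻¹ C`. Then the
leading entry of the inverse satisfies
`(e₁;0)ᵀ M⁻¹ (e₁;0) = (1 + e₁ᵀ B (D − BᵀB)⁻¹ Bᵀ e₁) / U₁₁²`; in particular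
`√((e₁;0)ᵀ M⁻¹ (e₁;0)) = c / U₁₁` with `c = √(1 + e₁ᵀ B (D − BᵀB)⁻¹ Bᵀ e₁)`. -/
theorem leading_entry_of_block_inverse
    {m p : ℕ} [NeZero m]
    (A : Matrix (Fin m) (Fin m) ℝ) (C : Matrix (Fin m) (Fin p) ℝ)
    (D : Matrix (Fin p) (Fin p) ℝ)
    (hM : (Matrix.fromBlocks A C Cᵀ D).PosDef)
    (U : Matrix (Fin m) (Fin m) ℝ)
    (hUt : ∀ i j : Fin m, j < i → U i j = 0)
    (hUd : ∀ i : Fin m, 0 < U i i)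
    (hA : A = U * Uᵀ) :
    let B : Matrix (Fin m) (Fin p) ℝ := U⁻¹ * C
    let q : ℝ :=
      Pi.single (0 : Fin m) 1 ⬝ᵥ
        (B *ᵥ ((D - Bᵀ * B)⁻¹ *ᵥ (Bᵀ *ᵥ Pi.single (0 : Fin m) 1)))
    (Sum.elim (Pi.single (0 : Fin m) 1) (0 : Fin p → ℝ) ⬝ᵥ
        ((Matrix.fromBlocks A C Cᵀ D)⁻¹ *ᵥ
          Sum.elim (Pi.single (0 : Fin m) 1) (0 : Fin p → ℝ)) =
      (1 + q) / (U 0 0) ^ 2) ∧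
    Real.sqrt (Sum.elim (Pi.single (0 : Fin m) 1) (0 : Fin p → ℝ) ⬝ᵥ
        ((Matrix.fromBlocks A C Cᵀ D)⁻¹ *ᵥ
          Sum.elim (Pi.single (0 : Fin m) 1) (0 : Fin p → ℝ))) =
      Real.sqrt (1 + q) / U 0 0 := by
  intro B q
  subst hA
  have hUupper : U.IsUpperTriangular := hUt
  have hU : IsUnit U := by
    rw [isUnit_iff_isUnit_det, det_of_isUpperTriangular hUupper]
    exact (Finset.prod_pos fun i _ => hUd i).ne'.isUnit
  have hq : Pi.single 0 1 ⬝ᵥ ((1 + B * (D - Bᵀ * B)⁻¹ * Bᵀ) *ᵥ Pi.single 0 1) = 1 + q := by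
    simp only [add_mulVec, one_mulVec, dotProduct_add, ← mulVec_mulVec, q]
    simp
  have hentry : Sum.elim (Pi.single (0 : Fin m) 1) (0 : Fin p → ℝ) ⬝ᵥ
      ((fromBlocks (U * Uᵀ) C Cᵀ D)⁻¹ *ᵥ Sum.elim (Pi.single (0 : Fin m) 1) 0) =
      (1 + q) / U 0 0 ^ 2 := by
    rw [sumElim_dotProduct_mulVec_sumElim_zero,
      toBlocks₁₁_inv_fromBlocks_mul_transpose U C D hU hM.isUnit,
      dotProduct_transpose_mul_mul_mulVec, hUupper.inv_mulVec_single_zero hU, mulVec_smul,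
      smul_dotProduct, dotProduct_smul, hq, smul_eq_mul, smul_eq_mul]
    field_simp
  refine ⟨hentry, ?_⟩
  rw [hentry, Real.sqrt_div' _ (sq_nonneg _), Real.sqrt_sq (hUd 0).le]
end
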